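/- Let (ω, a) be a Hitchin pair on M (ω symplectic, a commuting with ω, and ω_a closed) with twist σ = −(ω + a*ω). Then for all vector fields X, Y, Z: dσ_a(X,Y,Z) = dσ(aX,Y,Z) + dσ(X,aY,Z) + dσ(X,Y,aZ), where σ_a(X,Y) = σ(aX,Y). -/

import Mathlib

noncomputable section

open Derivation

variable (A : Type*) [CommRing A] [Algebra ℝ A]

/-- Vector fields on the "manifold" with function algebra `A`. -/
abbrev VecF := Derivation ℝ A A

/-- One-forms: `A`-linear functionals on vector fields. -/
abbrev OneForm := VecF A →ₗ[A] A

variable {A}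

/-- The differential of a function, as a one-form. -/
def dFun (f : A) : OneForm A where
  toFun X := X f
  map_add' X Y := rfl
  map_smul' a X := rfl

/-- The Lie derivative of a one-form along a vector field (as a one-form). -/
def lieOneForm (X : VecF A) (ξ : OneForm A) : OneForm A where
  toFun Y := X (ξ Y) - ξ ⁅X, Y⁆
  map_add' Y Z := by simp [map_add]; ring
  map_smul' f Y := by
    have hb : ⁅X, f • Y⁆ = f • ⁅X, Y⁆ + (X f) • Y := by
      ext g
      simp [Derivation.commutator_apply, Derivation.leibniz, smul_eq_mul]
    simp [hb, Derivation.leibniz, smul_eq_mul]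
    ring

/-- The exterior derivative of a 2-form (given as a bilinear expression on
vector fields), defined by the Koszul-type formula. -/
def dTwo (σ : VecF A → VecF A → A) : VecF A → VecF A → VecF A → A :=
  fun X Y Z =>
    X (σ Y Z) - Y (σ X Z) + Z (σ X Y)
      - σ ⁅X, Y⁆ Z + σ ⁅X, Z⁆ Y - σ ⁅Y, Z⁆ X

/-- The Nijenhuis torsion of a `(1,1)`-tensor. -/
def nijenhuis (a : VecF A →ₗ[A] VecF A) (X Y : VecF A) : VecF A :=
  ⁅a X, a Y⁆ + a (a ⁅X, Y⁆) - a ⁅a X, Y⁆ - a ⁅X, a Y⁆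

/-- The canonical pairing on `TM ⊕ T*M`. -/
def cPair (α β : VecF A × OneForm A) : A := α.2 β.1 + β.2 α.1

/-- The Courant bracket on sections of `TM ⊕ T*M`. -/
def courant (α β : VecF A × OneForm A) : VecF A × OneForm A :=
  (⁅α.1, β.1⁆,
    lieOneForm α.1 β.2 - lieOneForm β.1 α.2
      - algebraMap ℝ A (1/2) • dFun (β.2 α.1 - α.2 β.1))

/-- The twist of a pair `(ω, a)`: the 2-form `σ = −(ω + a*ω)`. -/
def twist (ω : VecF A →ₗ[A] VecF A →ₗ[A] A) (a : VecF A →ₗ[A] VecF A) :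
    VecF A → VecF A → A :=
  fun U V => -(ω U V + ω (a U) (a V))

/-! Write `ι_a τ` for `τ(aX,Y,Z) + τ(X,aY,Z) + τ(X,Y,aZ)` and `β^a(U,V) := β(aU,aV)`.
The defect `d(β_a) - ι_a dβ` is linear in the 2-form `β`, and `σ = -(ω + ω^a)`, `σ_a = -(ω_a + (ω_a)^a)`.
For `β = ω` the defect is `dω_a - ι_a dω = 0`. For `β = ω^a`, expanding the Koszul formula and
moving every `a` to the first slot of `ω` turns the defect into `dω(aX,aY,aZ)` minus the double
insertion of `a` into `dω_a`, which vanishes as well. -/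

lemma dTwo_add (σ τ : VecF A → VecF A → A) : dTwo (σ + τ) = dTwo σ + dTwo τ := by
  ext X Y Z
  simp only [dTwo, Pi.add_apply, map_add]
  ring

lemma dTwo_neg (σ : VecF A → VecF A → A) : dTwo (-σ) = -dTwo σ := by
  ext X Y Z
  simp only [dTwo, Pi.neg_apply, map_neg]
  ring

def insertion₁ (a : VecF A →ₗ[A] VecF A) (τ : VecF A → VecF A → VecF A → A) :
    VecF A → VecF A → VecF A → A :=
  fun X Y Z => τ (a X) Y Z + τ X (a Y) Z + τ X Y (a Z)

def insertion₂ (a : VecF A →ₗ[A] VecF A) (τ : VecF A → VecF A → VecF A → A) :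
    VecF A → VecF A → VecF A → A :=
  fun X Y Z => τ (a X) (a Y) Z + τ (a X) Y (a Z) + τ X (a Y) (a Z)

lemma dTwo_sub_insertion₁_eq_of_comm (β : VecF A →ₗ[A] VecF A →ₗ[A] A) (a : VecF A →ₗ[A] VecF A)
    (hcomm : ∀ X Y, β (a X) Y = β X (a Y)) (X Y Z : VecF A) :
    dTwo (fun U V => β (a (a U)) (a V)) X Y Z
        - insertion₁ a (dTwo fun U V => β (a U) (a V)) X Y Z
      = dTwo (fun U V => β U V) (a X) (a Y) (a Z)
        - insertion₂ a (dTwo fun U V => β (a U) V) X Y Z := by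
  simp only [dTwo, insertion₁, insertion₂, ← hcomm]
  ring

theorem dTwo_twist_a_general
    (ω : VecF A →ₗ[A] VecF A →ₗ[A] A)
    (hclosed : ∀ X Y Z, dTwo (fun U V => ω U V) X Y Z = 0)
    (a : VecF A →ₗ[A] VecF A) (hcomm : ∀ X Y, ω (a X) Y = ω X (a Y))
    (hcloseda : ∀ X Y Z, dTwo (fun U V => ω (a U) V) X Y Z = 0) :
    ∀ X Y Z : VecF A,
      dTwo (fun U V => twist ω a (a U) V) X Y Z
        = dTwo (twist ω a) (a X) Y Z + dTwo (twist ω a) X (a Y) Z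
            + dTwo (twist ω a) X Y (a Z) := by
  intro X Y Z
  have hσ : twist ω a = -((fun U V => ω U V) + fun U V => ω (a U) (a V)) := rfl
  have hσa : (fun U V => twist ω a (a U) V)
      = -((fun U V => ω (a U) V) + fun U V => ω (a (a U)) (a V)) := rfl
  have key := dTwo_sub_insertion₁_eq_of_comm ω a hcomm X Y Z
  simp only [insertion₁, insertion₂, hclosed, hcloseda] at key
  rw [hσa, hσ, dTwo_neg, dTwo_add, dTwo_neg, dTwo_add]
  simp only [Pi.neg_apply, Pi.add_apply, hclosed, hcloseda]
  linear_combination -key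

/-- for a Hitchin pair `(ω, a)` with twist `σ`,
`dσ_a(X,Y,Z) = dσ(aX,Y,Z) + dσ(X,aY,Z) + dσ(X,Y,aZ)`. -/
theorem dTwo_twist_a
    (ω : VecF A →ₗ[A] VecF A →ₗ[A] A) (hskew : ∀ X Y, ω X Y = - ω Y X)
    (hclosed : ∀ X Y Z, dTwo (fun U V => ω U V) X Y Z = 0)
    (hnd : ∀ X : VecF A, (∀ Y, ω X Y = 0) → X = 0)
    (a : VecF A →ₗ[A] VecF A) (hcomm : ∀ X Y, ω (a X) Y = ω X (a Y))
    (hcloseda : ∀ X Y Z, dTwo (fun U V => ω (a U) V) X Y Z = 0) :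
    ∀ X Y Z : VecF A,
      dTwo (fun U V => twist ω a (a U) V) X Y Z
        = dTwo (twist ω a) (a X) Y Z + dTwo (twist ω a) X (a Y) Z
            + dTwo (twist ω a) X Y (a Z) :=
  dTwo_twist_a_general ω hclosed a hcomm hcloseda
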